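/- Fix an integer k ≥ 1. Let z_a, z_b ∈ ℂ with |z_a| ≠ 1, |z_b| ≠ 1 and z_a ≠ z_b, and suppose the Möbius transformation T is elliptic, i.e. D > 0 and (⟨z_a,z_b⟩ - 1)² < D, with irrational rotation number (1/π)·arccos((⟨z_a,z_b⟩ - 1)/√D). If a T-automorphic continuous function f : S¹ → ℝ vanishes at some point of S¹, then f is identically zero. -/

import Mathlib

open Metric

noncomputable section

/-- The Möbius transformation `T` associated with `z_a, z_b`. -/
def mob (za zb z : ℂ) : ℂ :=
  ((starRingEnd ℂ za * zb - 1) * z + (za - zb)) /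
    ((starRingEnd ℂ za - starRingEnd ℂ zb) * z + (za * starRingEnd ℂ zb - 1))

/-- `|T′(z)|`, the modulus of the complex derivative of `mob za zb`. -/
def mobDeriv (za zb z : ℂ) : ℝ :=
  |(1 - ‖za‖ ^ 2) * (1 - ‖zb‖ ^ 2)| /
    (‖(starRingEnd ℂ za - starRingEnd ℂ zb) * z
      + (za * starRingEnd ℂ zb - 1)‖) ^ 2

/-- A continuous function `f` on the unit circle is `T`-automorphic (with weight
exponent `k-1`) if `f(z) = |T′(z)|^{k-1}·f(T z)` on the circle. -/
def TAutomorphic (k : ℕ) (za zb : ℂ) (f : ℂ → ℝ) : Prop :=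
  ∀ z ∈ sphere (0 : ℂ) 1, f z = (mobDeriv za zb z) ^ (k - 1) * f (mob za zb z)

/-!
Write `T z = (α z + β) / (β̄ z + ᾱ)` with `α = z̄_a z_b - 1`, `β = z_a - z_b`: its matrix has
trace `2 Re α` and determinant `|α|² - |β|² = D`. In the elliptic case the eigenvalue
`c = √D e^{iθ}`, `cos θ = Re α / √D`, is not real, so the fixed point `p = (α - c) / β̄` lies off
the unit circle, and `s ↦ (e^{is} + p) / (1 + p̄ e^{is})` parametrises the circle so that `T`
becomes the translation `s ↦ s + 2θ`. The weight `|T′|^{k-1}` is positive on the circle, so the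
zeros of `f` pulled back to `ℝ` form a closed set invariant under translation by `2θ` and `2π`;
as `θ / π` is irrational these generate a dense subgroup, and a nonempty such set is all of `ℝ`.
-/

open Set Function Complex ComplexConjugate

theorem IsClosed.eq_univ_of_periodic {Z : Set ℝ} (hZ : IsClosed Z) (hne : Z.Nonempty) {a b : ℝ}
    (ha : Periodic (· ∈ Z) a) (hb : Periodic (· ∈ Z) b) (hab : Irrational (a / b)) :
    Z = univ := by
  obtain ⟨z, hz⟩ := hne
  have hperiods : ∀ c ∈ AddSubgroup.closure {a, b}, Periodic (· ∈ Z) c := fun c hc =>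
    AddSubgroup.closure_induction (by rintro _ (rfl | rfl); exacts [ha, hb])
      (fun x => by rw [add_zero]) (fun _ _ _ _ => Periodic.add_period) (fun _ _ => Periodic.neg) hc
  have hdense : Dense {c | z + c ∈ Z} :=
    (dense_addSubgroupClosure_pair_iff.2 hab).mono fun c hc => by
      simpa [add_comm c, hz] using hperiods c hc z
  have hclosed : IsClosed {c | z + c ∈ Z} := hZ.preimage (continuous_const_add z)
  refine eq_univ_of_forall fun x => ?_
  simpa using hclosed.closure_subset (hdense (x - z))

/-- The Möbius map of the matrix `[[α, β], [β̄, ᾱ]]`. -/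
def su11Mobius (α β z : ℂ) : ℂ := (α * z + β) / (conj β * z + conj α)

section su11Mobius

variable {α β γ δ c p z : ℂ}

theorem su11Mobius_comp (hz : conj δ * z + conj γ ≠ 0) :
    su11Mobius α β (su11Mobius γ δ z) =
      su11Mobius (α * γ + β * conj δ) (α * δ + β * conj γ) z := by
  have hnum : α * ((γ * z + δ) / (conj δ * z + conj γ)) + β =
      ((α * γ + β * conj δ) * z + (α * δ + β * conj γ)) / (conj δ * z + conj γ) := by
    rw [mul_div_assoc', div_add' _ _ _ hz]; ring_nf
  have hden : conj β * ((γ * z + δ) / (conj δ * z + conj γ)) + conj α =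
      (conj (α * δ + β * conj γ) * z + conj (α * γ + β * conj δ)) / (conj δ * z + conj γ) := by
    rw [mul_div_assoc', div_add' _ _ _ hz]; simp only [map_add, map_mul, conj_conj]; ring_nf
  rw [su11Mobius, su11Mobius, hnum, hden, div_div_div_cancel_right₀ hz, su11Mobius]

theorem conj_mul_add_conj_ne_zero (h : ‖β‖ ≠ ‖α‖) (hz : ‖z‖ = 1) : conj β * z + conj α ≠ 0 := by
  intro h0
  apply h
  simpa [hz] using congrArg norm (eq_neg_of_add_eq_zero_left h0)

theorem norm_su11Mobius (h : ‖β‖ ≠ ‖α‖) (hz : ‖z‖ = 1) : ‖su11Mobius α β z‖ = 1 := by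
  have hzz : z * conj z = 1 := by rw [mul_conj', hz]; norm_num
  have hden : conj β * z + conj α = z * conj (α * z + β) := by
    simp only [map_add, map_mul]; linear_combination (-conj α) * hzz
  have hne := conj_mul_add_conj_ne_zero h hz
  rw [hden] at hne
  rw [su11Mobius, norm_div, hden, norm_mul, hz, one_mul, Complex.norm_conj,
    div_self (norm_ne_zero_iff.2 (right_ne_zero_of_mul hne ∘ (map_eq_zero _).2))]

theorem su11Mobius_neg_inverse (hp : ‖p‖ ≠ 1) (hz : ‖z‖ = 1) :
    su11Mobius 1 p (su11Mobius 1 (-p) z) = z := by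
  have hp' : ‖-p‖ ≠ ‖(1 : ℂ)‖ := by simpa using hp
  have hnormSq : (1 - normSq p : ℂ) ≠ 0 := by
    norm_cast
    rw [← Ne, sub_ne_zero, normSq_eq_norm_sq, ne_comm, Ne,
      pow_eq_one_iff_of_nonneg (norm_nonneg p) two_ne_zero]
    exact hp
  rw [su11Mobius_comp (conj_mul_add_conj_ne_zero hp' hz), su11Mobius]
  simp only [map_neg, map_one, mul_one, one_mul, mul_neg, mul_conj, neg_add_cancel, map_zero,
    zero_mul, add_zero, zero_add, map_sub, conj_ofReal, ← sub_eq_add_neg]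
  field_simp

theorem su11Mobius_conj_rotation (hβ : β ≠ 0) (hc : c ≠ 0) (hre : c.re = α.re)
    (hnormSq : normSq c = normSq α - normSq β) (hp : conj β * p = α - c)
    (hz : conj p * z + 1 ≠ 0) :
    su11Mobius α β (su11Mobius 1 p z) = su11Mobius 1 p (su11Mobius c 0 z) := by
  have htrace : c + conj c = α + conj α := by rw [add_conj, add_conj, hre]
  have hdet : c * conj c = α * conj α - β * conj β := by
    rw [mul_conj, mul_conj, mul_conj, hnormSq]; push_cast; ring
  have hconj_p : β * conj p = conj α - conj c := by
    simpa using congrArg conj hp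
  have hlin : α * 1 + β * conj p = 1 * c + p * conj 0 := by
    rw [map_zero]; linear_combination hconj_p - htrace
  have hconst : α * p + β * conj 1 = 1 * 0 + p * conj c := by
    rw [map_one]
    refine mul_left_cancel₀ ((map_ne_zero conj).2 hβ) ?_
    linear_combination (α - conj c) * hp - α * htrace + hdet
  -- by the composition law both sides are `su11Mobius c (p * conj c) z`
  rw [su11Mobius_comp (by rwa [map_one]), hlin, hconst,
    su11Mobius_comp (by simpa using hc)]

theorem norm_ne_one_of_conj_mul_eq (hβ : β ≠ 0) (hre : c.re = α.re)
    (hnormSq : normSq c = normSq α - normSq β) (him : c.im ≠ 0) (hp : conj β * p = α - c) :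
    ‖p‖ ≠ 1 := by
  intro hp1
  have hsq : normSq (α - c) = normSq β := by
    rw [← hp, normSq_mul, normSq_conj, normSq_eq_norm_sq p, hp1, one_pow, mul_one]
  rw [normSq_apply, sub_re, sub_im, hre] at hsq
  rw [normSq_apply, normSq_apply, hre] at hnormSq
  have him_eq : c.im = α.im := by
    have : c.im * (c.im - α.im) = 0 := by nlinarith
    exact sub_eq_zero.1 ((mul_eq_zero.1 this).resolve_left him)
  rw [him_eq] at hsq
  exact hβ (normSq_eq_zero.1 (by linarith))

theorem su11Mobius_ofReal_mul_exp (r θ s : ℝ) (hr : r ≠ 0) :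
    su11Mobius (r * exp (θ * I)) 0 (exp (s * I)) = exp ((s + 2 * θ) * I) := by
  have hconj : conj ((r : ℂ) * exp (θ * I)) = r * exp (-θ * I) := by
    rw [map_mul, conj_ofReal, ← exp_conj, map_mul, conj_ofReal, conj_I]; ring_nf
  rw [su11Mobius, hconj, map_zero, zero_mul, zero_add, add_zero,
    div_eq_iff (mul_ne_zero (ofReal_ne_zero.2 hr) (exp_ne_zero _)), mul_assoc, ← exp_add,
    mul_left_comm, ← exp_add]
  ring_nf

end su11Mobius

/-- The root `√D e^{iθ}`, `cos θ = a / √D`, of `X² - 2aX + D`; it is not real when `a² < D`. -/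
def ellipticEigenvalue (a D : ℝ) : ℂ := √D * exp (Real.arccos (a / √D) * I)

section ellipticEigenvalue

variable {a D : ℝ}

theorem ellipticEigenvalue_re (h : a ^ 2 < D) : (ellipticEigenvalue a D).re = a := by
  have hD : 0 < √D := Real.sqrt_pos.2 ((sq_nonneg a).trans_lt h)
  have habs : |a / √D| ≤ 1 := by
    rw [abs_div, abs_of_pos hD, div_le_one hD, ← Real.sqrt_sq_eq_abs]
    exact Real.sqrt_le_sqrt h.le
  rw [ellipticEigenvalue, re_ofReal_mul, exp_ofReal_mul_I_re,
    Real.cos_arccos (abs_le.1 habs).1 (abs_le.1 habs).2, mul_div_cancel₀ _ hD.ne']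

theorem ellipticEigenvalue_im_pos (h : a ^ 2 < D) : 0 < (ellipticEigenvalue a D).im := by
  have hD : 0 < D := (sq_nonneg a).trans_lt h
  have hlt : (a / √D) ^ 2 < 1 := by
    rwa [div_pow, Real.sq_sqrt hD.le, div_lt_one hD]
  rw [ellipticEigenvalue, im_ofReal_mul, exp_ofReal_mul_I_im, Real.sin_arccos]
  exact mul_pos (Real.sqrt_pos.2 hD) (Real.sqrt_pos.2 (sub_pos.2 hlt))

theorem normSq_ellipticEigenvalue (h : a ^ 2 < D) : normSq (ellipticEigenvalue a D) = D := by
  rw [ellipticEigenvalue, normSq_mul, normSq_ofReal, normSq_eq_norm_sq, norm_exp_ofReal_mul_I,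
    one_pow, mul_one, Real.mul_self_sqrt ((sq_nonneg a).trans h.le)]

end ellipticEigenvalue

theorem exists_circle_param_su11Mobius_eq_rotation {α β : ℂ} (hβ : β ≠ 0)
    (hell : α.re ^ 2 < normSq α - normSq β) :
    ∃ ψ : ℝ → ℂ, Continuous ψ ∧ Periodic ψ (2 * Real.pi) ∧ (∀ s, ψ s ∈ sphere (0 : ℂ) 1) ∧
      sphere (0 : ℂ) 1 ⊆ range ψ ∧
      ∀ s, su11Mobius α β (ψ s) =
        ψ (s + 2 * Real.arccos (α.re / √(normSq α - normSq β))) := by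
  set c := ellipticEigenvalue α.re (normSq α - normSq β)
  set p := (α - c) / conj β
  have hD : 0 < normSq α - normSq β := (sq_nonneg _).trans_lt hell
  have hre : c.re = α.re := ellipticEigenvalue_re hell
  have hnormSq : normSq c = normSq α - normSq β := normSq_ellipticEigenvalue hell
  have him : c.im ≠ 0 := (ellipticEigenvalue_im_pos hell).ne'
  have hc : c ≠ 0 := fun h => him (by rw [h, zero_im])
  have hp : conj β * p = α - c := mul_div_cancel₀ _ ((map_ne_zero conj).2 hβ)
  have hp1 : ‖p‖ ≠ 1 := norm_ne_one_of_conj_mul_eq hβ hre hnormSq him hp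
  have hp1' : ‖p‖ ≠ ‖(1 : ℂ)‖ := by rwa [norm_one]
  have hden : ∀ s : ℝ, conj p * exp (s * I) + conj 1 ≠ 0 := fun s =>
    conj_mul_add_conj_ne_zero hp1' (norm_exp_ofReal_mul_I s)
  refine ⟨fun s => su11Mobius 1 p (exp (s * I)), ?_, fun s => ?_, fun s => ?_, fun z hz => ?_,
    fun s => ?_⟩
  · exact Continuous.div (by fun_prop) (by fun_prop) hden
  · exact congrArg (su11Mobius 1 p) (by push_cast; exact exp_mul_I_periodic s)
  · exact mem_sphere_zero_iff_norm.2 (norm_su11Mobius hp1' (norm_exp_ofReal_mul_I s))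
  · have hz1 : ‖z‖ = 1 := mem_sphere_zero_iff_norm.1 hz
    have hu : ‖su11Mobius 1 (-p) z‖ = 1 := norm_su11Mobius (by simpa using hp1) hz1
    refine ⟨arg (su11Mobius 1 (-p) z), ?_⟩
    have hexp := norm_mul_exp_arg_mul_I (su11Mobius 1 (-p) z)
    rw [hu, ofReal_one, one_mul] at hexp
    simp only [hexp, su11Mobius_neg_inverse hp1 hz1]
  · have hrotation : su11Mobius c 0 (exp (s * I)) =
        exp ((s + 2 * Real.arccos (α.re / √(normSq α - normSq β))) * I) :=
      su11Mobius_ofReal_mul_exp _ _ _ (Real.sqrt_pos.2 hD).ne'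
    dsimp only
    rw [su11Mobius_conj_rotation hβ hc hre hnormSq hp (by simpa using hden s), hrotation,
      ofReal_add, ofReal_mul, ofReal_ofNat]

section mob

variable {za zb z : ℂ}

theorem mob_eq_su11Mobius (za zb : ℂ) : mob za zb = su11Mobius (conj za * zb - 1) (za - zb) := by
  funext z
  simp only [mob, su11Mobius, map_sub, map_mul, map_one, conj_conj]

theorem normSq_sub_normSq_eq (za zb : ℂ) :
    normSq (conj za * zb - 1) - normSq (za - zb) = (1 - ‖za‖ ^ 2) * (1 - ‖zb‖ ^ 2) := by
  simp only [Complex.sq_norm, normSq_apply, sub_re, sub_im, mul_re, mul_im, conj_re, conj_im,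
    one_re, one_im]
  ring

theorem mobDeriv_pos (hD : (1 - ‖za‖ ^ 2) * (1 - ‖zb‖ ^ 2) ≠ 0) (hz : ‖z‖ = 1) :
    0 < mobDeriv za zb z := by
  have hnorm : ‖za - zb‖ ≠ ‖conj za * zb - 1‖ := by
    rw [← normSq_sub_normSq_eq, sub_ne_zero, normSq_eq_norm_sq, normSq_eq_norm_sq] at hD
    exact fun h => hD (by rw [h])
  have hden := conj_mul_add_conj_ne_zero hnorm hz
  simp only [map_sub, map_mul, map_one, conj_conj] at hden
  exact div_pos (abs_pos.2 hD) (pow_pos (norm_pos_iff.2 hden) 2)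

theorem TAutomorphic.eq_zero_iff {k : ℕ} {f : ℂ → ℝ} (haut : TAutomorphic k za zb f)
    (hD : (1 - ‖za‖ ^ 2) * (1 - ‖zb‖ ^ 2) ≠ 0) (hz : z ∈ sphere (0 : ℂ) 1) :
    f (mob za zb z) = 0 ↔ f z = 0 := by
  have hweight := pow_pos (mobDeriv_pos hD (mem_sphere_zero_iff_norm.1 hz)) (k - 1)
  rw [haut z hz, mul_eq_zero_iff_left hweight.ne']

end mob

theorem automorphic_elliptic_irrational_vanishes_general
    (k : ℕ) (za zb : ℂ)
    (hab : za ≠ zb)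
    (hD : 0 < (1 - ‖za‖ ^ 2) * (1 - ‖zb‖ ^ 2))
    (hell : ((starRingEnd ℂ za * zb).re - 1) ^ 2
      < (1 - ‖za‖ ^ 2) * (1 - ‖zb‖ ^ 2))
    (hirr : Irrational
      (Real.arccos (((starRingEnd ℂ za * zb).re - 1) /
          Real.sqrt ((1 - ‖za‖ ^ 2) * (1 - ‖zb‖ ^ 2))) / Real.pi))
    (f : ℂ → ℝ) (hf : ContinuousOn f (sphere (0 : ℂ) 1))
    (haut : TAutomorphic k za zb f)
    (hzero : ∃ z₀ ∈ sphere (0 : ℂ) 1, f z₀ = 0) :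
    ∀ z ∈ sphere (0 : ℂ) 1, f z = 0 := by
  have hre : (conj za * zb - 1).re = (conj za * zb).re - 1 := by simp
  rw [← hre, ← normSq_sub_normSq_eq] at hell hirr
  obtain ⟨ψ, hψ, hperiod, hmem, hsurj, hshift⟩ :=
    exists_circle_param_su11Mobius_eq_rotation (sub_ne_zero.2 hab) hell
  set θ := Real.arccos ((conj za * zb - 1).re / √(normSq (conj za * zb - 1) - normSq (za - zb)))
  have hzeros_ne : {s | f (ψ s) = 0}.Nonempty := by
    obtain ⟨z₀, hz₀, hfz₀⟩ := hzero
    obtain ⟨s, rfl⟩ := hsurj hz₀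
    exact ⟨s, hfz₀⟩
  have hzeros_shift : Periodic (· ∈ {s | f (ψ s) = 0}) (2 * θ) := fun s => by
    simp only [mem_ofPred_eq, ← hshift, ← mob_eq_su11Mobius, haut.eq_zero_iff hD.ne' (hmem s)]
  have hzeros_period : Periodic (· ∈ {s | f (ψ s) = 0}) (2 * Real.pi) := fun s => by
    simp only [mem_ofPred_eq, hperiod s]
  have hzeros : {s | f (ψ s) = 0} = univ :=
    (isClosed_eq (hf.comp_continuous hψ hmem) continuous_const).eq_univ_of_periodic hzeros_ne
      hzeros_shift hzeros_period (by rwa [mul_div_mul_left _ _ two_ne_zero])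
  intro z hz
  obtain ⟨s, rfl⟩ := hsurj hz
  exact eq_univ_iff_forall.1 hzeros s

theorem automorphic_elliptic_irrational_vanishes
    (k : ℕ) (hk : 1 ≤ k) (za zb : ℂ)
    (hza : ‖za‖ ≠ 1) (hzb : ‖zb‖ ≠ 1) (hab : za ≠ zb)
    (hD : 0 < (1 - ‖za‖ ^ 2) * (1 - ‖zb‖ ^ 2))
    (hell : ((starRingEnd ℂ za * zb).re - 1) ^ 2
      < (1 - ‖za‖ ^ 2) * (1 - ‖zb‖ ^ 2))
    (hirr : Irrational
      (Real.arccos (((starRingEnd ℂ za * zb).re - 1) /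
          Real.sqrt ((1 - ‖za‖ ^ 2) * (1 - ‖zb‖ ^ 2))) / Real.pi))
    (f : ℂ → ℝ) (hf : ContinuousOn f (sphere (0 : ℂ) 1))
    (haut : TAutomorphic k za zb f)
    (hzero : ∃ z₀ ∈ sphere (0 : ℂ) 1, f z₀ = 0) :
    ∀ z ∈ sphere (0 : ℂ) 1, f z = 0 :=
  automorphic_elliptic_irrational_vanishes_general k za zb hab hD hell hirr f hf haut hzero
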